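/- Let n ≥ 2, let H be a proper nonzero linear subspace of ℝⁿ and let ♢_H be an H-symmetrization on 𝒦ⁿ which is monotone, H⊥-translation invariant on H-symmetric sets, and invariant on H-symmetric sets. Then for every K ∈ 𝒦ⁿ one has F_H K ⊆ ♢_H K ⊆ M_H K, where F_H and M_H are the fiber and Minkowski symmetrizations with respect to H. -/

import Mathlib

open Filter Topology Metric Set Pointwise MeasureTheory

noncomputable section

abbrev Euc (n : ℕ) := EuclideanSpace ℝ (Fin n)

def IsConvexBody {n : ℕ} (K : Set (Euc n)) : Prop :=
  K.Nonempty ∧ IsCompact K ∧ Convex ℝ K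

def reflMap {n : ℕ} (H : Submodule ℝ (Euc n)) : Euc n → Euc n :=
  (Submodule.reflection H : Euc n ≃ₗᵢ[ℝ] Euc n)

/-- Minkowski symmetrization with respect to the subspace `H`. -/
def mink {n : ℕ} (H : Submodule ℝ (Euc n)) (C : Set (Euc n)) : Set (Euc n) :=
  (2⁻¹ : ℝ) • (C + reflMap H '' C)

/-- Fiber symmetrization with respect to the subspace `H`. -/
def fiber {n : ℕ} (H : Submodule ℝ (Euc n)) (K : Set (Euc n)) : Set (Euc n) :=
  ⋃ x ∈ (H : Set (Euc n)),
    (2⁻¹ : ℝ) • ((K ∩ ((Hᗮ : Set (Euc n)) + {x})) +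
      reflMap H '' (K ∩ ((Hᗮ : Set (Euc n)) + {x})))

/-!
For `a, b ∈ K` in a common fibre, the segment `[a, b] ⊆ K` is the translate by a vector of `Hᗮ`
of the `H`-symmetric segment `[z, R z]`, `z = (a + R b) / 2`; translation invariance and
monotonicity give `z ∈ ♢ K`, whence `F_H K ⊆ ♢ K`.

For a linear functional `f`, a translation of `K` by a vector of `Hᗮ` equalises the maxima of `f`
and of `f ∘ R` on `K` at their average `m`, which is the maximum of `f` on `M_H K`. The translate
lies in the `H`-symmetric body `{f ≤ m} ∩ R⁻¹ {f ≤ m} ∩ B` (`B` a large ball), so `f ≤ m` on `♢ K`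
by monotonicity and translation invariance. Separation then gives `♢ K ⊆ M_H K`.
-/

namespace Submodule

lemma exists_mem_apply_eq {𝕜 V : Type*} [Field 𝕜] [AddCommGroup V] [Module 𝕜 V]
    (S : Submodule 𝕜 V) (f : V →ₗ[𝕜] 𝕜) {t : 𝕜} (ht : (∀ v ∈ S, f v = 0) → t = 0) :
    ∃ v ∈ S, f v = t := by
  by_cases hf : ∃ v ∈ S, f v ≠ 0
  · obtain ⟨v, hv, hfv⟩ := hf
    exact ⟨(t / f v) • v, S.smul_mem _ hv, by rw [map_smul, smul_eq_mul, div_mul_cancel₀ _ hfv]⟩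
  · exact ⟨0, S.zero_mem, by rw [map_zero, ht (by simpa using hf)]⟩

variable {E : Type*} [NormedAddCommGroup E] [InnerProductSpace ℝ E]
  (K : Submodule ℝ E) [K.HasOrthogonalProjection]

lemma sub_reflection_mem_orthogonal (x : E) : x - K.reflection x ∈ Kᗮ := by
  have h : x - K.reflection x = (2 : ℝ) • (x - K.starProjection x) := by
    rw [reflection_apply]; module
  rw [h]
  exact Kᗮ.smul_mem _ (K.sub_starProjection_mem_orthogonal x)

lemma apply_reflection_eq_of_orthogonal {f : E →ₗ[ℝ] ℝ} (hf : ∀ v ∈ Kᗮ, f v = 0) (x : E) :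
    f (K.reflection x) = f x := by
  have h := hf _ (K.sub_reflection_mem_orthogonal x)
  rw [map_sub, sub_eq_zero] at h
  exact h.symm

end Submodule

section Symmetrization

variable {n : ℕ} {H : Submodule ℝ (Euc n)}

lemma reflMap_eq (H : Submodule ℝ (Euc n)) : reflMap H = H.reflection := rfl

lemma isConvexBody_segment (a b : Euc n) : IsConvexBody (segment ℝ a b) := by
  refine ⟨⟨a, left_mem_segment ℝ a b⟩, ?_, convex_segment a b⟩
  rw [← convexHull_pair]
  exact (toFinite _).isCompact_convexHull ℝ

lemma IsConvexBody.add_singleton {K : Set (Euc n)} (hK : IsConvexBody K) (x : Euc n) :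
    IsConvexBody (K + {x}) :=
  ⟨hK.1.add (singleton_nonempty x), hK.2.1.add isCompact_singleton,
    hK.2.2.add (convex_singleton x)⟩

lemma isCompact_mink {K : Set (Euc n)} (hK : IsCompact K) : IsCompact (mink H K) :=
  (hK.add (hK.image H.reflection.continuous)).smul _

lemma convex_mink {K : Set (Euc n)} (hK : Convex ℝ K) : Convex ℝ (mink H K) :=
  (hK.add (hK.linear_image H.reflection.toLinearEquiv.toLinearMap)).smul _

lemma exists_of_mem_fiber {K : Set (Euc n)} {z : Euc n} (hz : z ∈ fiber H K) :
    ∃ a ∈ K, ∃ b ∈ K, a - b ∈ Hᗮ ∧ z = (2⁻¹ : ℝ) • (a + reflMap H b) := by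
  simp only [fiber, mem_iUnion, mem_smul_set, Set.mem_add, mem_image, mem_inter_iff,
    mem_singleton_iff] at hz
  obtain ⟨x, -, _, ⟨a, ⟨haK, p, hp, _, rfl, rfl⟩, _, ⟨b, ⟨hbK, q, hq, _, rfl, rfl⟩, rfl⟩, rfl⟩,
    rfl⟩ := hz
  exact ⟨_, haK, _, hbK, by simpa using Hᗮ.sub_mem hp hq, rfl⟩

lemma reflMap_image_segment (z : Euc n) :
    reflMap H '' segment ℝ z (reflMap H z) = segment ℝ z (reflMap H z) := by
  have h : reflMap H '' segment ℝ z (reflMap H z) =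
      segment ℝ (reflMap H z) (reflMap H (reflMap H z)) :=
    image_segment ℝ H.reflection.toLinearEquiv.toLinearMap.toAffineMap z (reflMap H z)
  rw [h, reflMap_eq, Submodule.reflection_reflection, segment_symm]

def IsMonotoneOnBodies (D : Set (Euc n) → Set (Euc n)) : Prop :=
  ∀ ⦃K L⦄, IsConvexBody K → IsConvexBody L → K ⊆ L → D K ⊆ D L

variable (H) in
def IsTranslationInvariantOnSymmetric (D : Set (Euc n) → Set (Euc n)) : Prop :=
  ∀ ⦃K⦄, IsConvexBody K → reflMap H '' K = K → ∀ x ∈ Hᗮ, D (K + {x}) = K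

variable {D : Set (Euc n) → Set (Euc n)}

lemma IsTranslationInvariantOnSymmetric.half_add_reflMap_mem
    (htrans : IsTranslationInvariantOnSymmetric H D) {a b : Euc n} (hab : a - b ∈ Hᗮ) :
    (2⁻¹ : ℝ) • (a + reflMap H b) ∈ D (segment ℝ a b) := by
  set z := (2⁻¹ : ℝ) • (a + reflMap H b)
  set w := (2⁻¹ : ℝ) • (a - reflMap H b)
  have hw : w ∈ Hᗮ := by
    refine Hᗮ.smul_mem _ ?_
    simpa [reflMap_eq] using Hᗮ.add_mem hab (H.sub_reflection_mem_orthogonal b)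
  have hRab : reflMap H a - reflMap H b = b - a := by
    rw [reflMap_eq, ← map_sub, H.reflection_mem_subspace_orthogonalComplement_eq_neg hab, neg_sub]
  have hz : z + w = a := by module
  have hRz : reflMap H z + w = b := by
    simp only [z, w, reflMap_eq, map_smul, map_add, Submodule.reflection_reflection] at hRab ⊢
    linear_combination (norm := module) (2⁻¹ : ℝ) • hRab
  have hseg : segment ℝ z (reflMap H z) + {w} = segment ℝ a b := by
    rw [Set.add_singleton, ← hz, ← hRz]
    simpa only [add_comm _ w] using segment_translate_image ℝ w z (reflMap H z)
  rw [← hseg, htrans (isConvexBody_segment _ _) (reflMap_image_segment z) w hw]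
  exact left_mem_segment ℝ _ _

theorem fiber_subset (hmono : IsMonotoneOnBodies D)
    (htrans : IsTranslationInvariantOnSymmetric H D)
    {K : Set (Euc n)} (hK : IsConvexBody K) : fiber H K ⊆ D K := by
  intro z hz
  obtain ⟨a, ha, b, hb, hab, rfl⟩ := exists_of_mem_fiber hz
  exact hmono (isConvexBody_segment a b) hK (hK.2.2.segment_subset ha hb)
    (htrans.half_add_reflMap_mem hab)

lemma forall_mem_apply_le_of_sub_le (hmono : IsMonotoneOnBodies D)
    (htrans : IsTranslationInvariantOnSymmetric H D) {K : Set (Euc n)} (hK : IsConvexBody K)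
    (f : Euc n →L[ℝ] ℝ) {x : Euc n} (hx : x ∈ Hᗮ) {m : ℝ}
    (hf : ∀ k ∈ K, f (k - x) ≤ m ∧ f (reflMap H (k - x)) ≤ m) : ∀ y ∈ D K, f y ≤ m := by
  obtain ⟨r, hr⟩ := hK.2.1.isBounded.subset_closedBall 0
  set S := f ⁻¹' Iic m
  set C := (S ∩ reflMap H ⁻¹' S) ∩ closedBall 0 (r + ‖x‖)
  have hKC : K ⊆ C + {x} := by
    intro k hk
    refine ⟨k - x, ⟨hf k hk, ?_⟩, x, rfl, sub_add_cancel k x⟩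
    rw [mem_closedBall_zero_iff]
    exact (norm_sub_le k x).trans (by linarith [mem_closedBall_zero_iff.1 (hr hk)])
  have hCsymm : reflMap H '' C = C := by
    rw [reflMap_eq, H.reflection_involutive.image_eq_preimage_symm]
    ext w
    simp [C, S, reflMap_eq, Submodule.reflection_reflection, and_comm]
  have hC : IsConvexBody C := by
    obtain ⟨k, hk⟩ := hK.1
    refine ⟨⟨k - x, ?_⟩, ?_, ?_⟩
    · obtain ⟨c, hc, _, rfl, hck⟩ := hKC hk
      simpa [← hck] using hc
    · exact (isCompact_closedBall 0 _).inter_left ((isClosed_Iic.preimage f.continuous).inter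
        ((isClosed_Iic.preimage f.continuous).preimage H.reflection.continuous))
    · exact (((convex_Iic m).linear_preimage f.toLinearMap).inter ((convex_Iic m).linear_preimage
        (f.toLinearMap ∘ₗ H.reflection.toLinearEquiv.toLinearMap))).inter (convex_closedBall 0 _)
  intro y hy
  have hyC : y ∈ C := htrans hC hCsymm x hx ▸ hmono hK (hC.add_singleton x) hKC hy
  exact hyC.1.1

theorem subset_mink (hmono : IsMonotoneOnBodies D)
    (htrans : IsTranslationInvariantOnSymmetric H D)
    {K : Set (Euc n)} (hK : IsConvexBody K) : D K ⊆ mink H K := by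
  obtain ⟨hKne, hKc, hKconv⟩ := hK
  intro y hy
  by_contra hyM
  obtain ⟨f, r, hfM, hfy⟩ := geometric_hahn_banach_closed_point (convex_mink hKconv)
    (isCompact_mink hKc).isClosed hyM
  obtain ⟨a, ha, haf⟩ := hKc.exists_isMaxOn hKne f.continuous.continuousOn
  obtain ⟨b, hb, hbf⟩ :=
    hKc.exists_isMaxOn hKne (f.continuous.comp H.reflection.continuous).continuousOn
  replace haf : ∀ k ∈ K, f k ≤ f a := isMaxOn_iff.1 haf
  replace hbf : ∀ k ∈ K, f (reflMap H k) ≤ f (reflMap H b) := isMaxOn_iff.1 hbf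
  obtain ⟨x, hx, hfx⟩ : ∃ x ∈ Hᗮ, f x = (f a - f (reflMap H b)) / 2 := by
    refine Hᗮ.exists_mem_apply_eq f.toLinearMap fun hf => ?_
    have hR : ∀ z, f (reflMap H z) = f z := H.apply_reflection_eq_of_orthogonal hf
    linarith [haf b hb, hbf a ha, hR a, hR b]
  have hRx : f (reflMap H x) = -f x := by
    rw [reflMap_eq, H.reflection_mem_subspace_orthogonalComplement_eq_neg hx, map_neg]
  have hfDK := forall_mem_apply_le_of_sub_le hmono htrans ⟨hKne, hKc, hKconv⟩ f hx
    (m := (f a + f (reflMap H b)) / 2) fun k hk => by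
      rw [map_sub, show reflMap H (k - x) = reflMap H k - reflMap H x from map_sub _ k x,
        map_sub, hRx]
      constructor <;> linarith [haf k hk, hbf k hk]
  have hz : (2⁻¹ : ℝ) • (a + reflMap H b) ∈ mink H K :=
    smul_mem_smul_set (add_mem_add ha (mem_image_of_mem _ hb))
  have hfz := hfM _ hz
  rw [map_smul, map_add, smul_eq_mul] at hfz
  linarith [hfDK y hy]

end Symmetrization

theorem stmt9_general {n : ℕ}
    (H : Submodule ℝ (Euc n))
    (D : Set (Euc n) → Set (Euc n))
    (hmono : ∀ ⦃K L⦄, IsConvexBody K → IsConvexBody L → K ⊆ L → D K ⊆ D L)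
    (htrans : ∀ ⦃K⦄, IsConvexBody K → reflMap H '' K = K → ∀ x ∈ Hᗮ, D (K + {x}) = K)
    (K : Set (Euc n)) (hK : IsConvexBody K) :
    fiber H K ⊆ D K ∧ D K ⊆ mink H K :=
  ⟨fiber_subset hmono htrans hK, subset_mink hmono htrans hK⟩

/-- Any `H`-symmetrization on the convex bodies which is monotone, `H^⊥`-translation
invariant on `H`-symmetric sets and invariant on `H`-symmetric sets lies between the fiber
and the Minkowski symmetrizations. -/
theorem stmt9 {n : ℕ} (hn : 2 ≤ n)
    (H : Submodule ℝ (Euc n)) (hb : H ≠ ⊥) (ht : H ≠ ⊤)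
    (D : Set (Euc n) → Set (Euc n))
    (hbody : ∀ ⦃K⦄, IsConvexBody K → IsConvexBody (D K))
    (hsymm : ∀ ⦃K⦄, IsConvexBody K → reflMap H '' D K = D K)
    (hmono : ∀ ⦃K L⦄, IsConvexBody K → IsConvexBody L → K ⊆ L → D K ⊆ D L)
    (htrans : ∀ ⦃K⦄, IsConvexBody K → reflMap H '' K = K → ∀ x ∈ Hᗮ, D (K + {x}) = K)
    (hinv : ∀ ⦃K⦄, IsConvexBody K → reflMap H '' K = K → D K = K)
    (K : Set (Euc n)) (hK : IsConvexBody K) :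
    fiber H K ⊆ D K ∧ D K ⊆ mink H K :=
  stmt9_general H D hmono htrans K hK
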